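/- arXiv:1001.4283 — 4 statements merged into one kernel-verified Lean document; each statement's English description precedes it below -/
import Mathlib

section
/- Let n be a nonnegative integer. If π is a quasi-partition of 2n (i.e. a sequence of nonnegative integers with π_i ≥ π_{i+2} for all i, summing to 2n) all of whose parts are even, and Φ^C(π) is the sequence obtained from π by replacing each pair of consecutive terms 2s, 2t with s+t, s+t whenever 2s < 2t, then Φ^C(π) is a partition of 2n in which every odd part has even multiplicity. -/
open Finset

/-- Partial sum of the first `k` terms of a sequence of naturals. -/
def psum (π : ℕ → ℕ) (k : ℕ) : ℕ := ∑ i ∈ Finset.range k, π i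

/-- A composition of `n`: almost all terms zero, summing to `n`. -/
def IsComposition (n : ℕ) (π : ℕ → ℕ) : Prop :=
  ∃ N, (∀ i, N ≤ i → π i = 0) ∧ psum π N = n

/-- Dominance order: `l` dominates `π`. -/
def Dominates (l π : ℕ → ℕ) : Prop := ∀ k, psum π k ≤ psum l k

/-- A partition: weakly decreasing sequence. -/
def IsPartition (π : ℕ → ℕ) : Prop := ∀ i, π (i + 1) ≤ π i

/-- A quasi-partition: `π i ≥ π (i+2)` for all `i`. -/
def IsQuasiPartition (π : ℕ → ℕ) : Prop := ∀ i, π (i + 2) ≤ π i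

/-- Interleaving of two sequences: `(ρ₁, σ₁, ρ₂, σ₂, …)` (0-indexed). -/
def interleave (ρ σ : ℕ → ℕ) (i : ℕ) : ℕ :=
  if i % 2 = 0 then ρ (i / 2) else σ (i / 2)

/-- A bipartition of `n`: a pair of partitions whose interleaving sums to `n`. -/
def IsBipartition (n : ℕ) (ρ σ : ℕ → ℕ) : Prop :=
  IsPartition ρ ∧ IsPartition σ ∧ IsComposition n (interleave ρ σ)

/-- Interleaved dominance order on bipartitions: `(ρ;σ) ≤ (μ;ν)`. -/
def BiLE (ρ σ μ ν : ℕ → ℕ) : Prop :=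
  Dominates (interleave μ ν) (interleave ρ σ)

/-- The map `Φ^C` on sequences: replace a consecutive pair `2s < 2t`
by `s+t, s+t` (pointwise description; replacements never overlap for
quasi-partitions). -/
def phiC (π : ℕ → ℕ) : ℕ → ℕ
  | 0 => if π 0 < π 1 then (π 0 + π 1) / 2 else π 0
  | (j + 1) =>
      if π (j + 1) < π (j + 2) then (π (j + 1) + π (j + 2)) / 2
      else if π j < π (j + 1) then (π j + π (j + 1)) / 2
      else π (j + 1)

/-- `Φ^C` of a bipartition: apply `phiC` to the doubled interleaving. -/
def PhiC (ρ σ : ℕ → ℕ) : ℕ → ℕ := phiC (fun i => 2 * interleave ρ σ i)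

/-- Membership in `P^C_{2n}`: partition of `2n` with every odd part of even
multiplicity. -/
def IsPC (n : ℕ) (l : ℕ → ℕ) : Prop :=
  IsPartition l ∧ IsComposition (2 * n) l ∧
    ∀ a : ℕ, Odd a → Even ({i | l i = a}.ncard)

/-- C-distinguished: `μ i ≥ ν i - 1` and `ν i ≥ μ (i+1) - 1`. -/
def QC (μ ν : ℕ → ℕ) : Prop :=
  ∀ i, ν i ≤ μ i + 1 ∧ μ (i + 1) ≤ ν i + 1

/-- B-distinguished: `μ i ≥ ν i - 2` and `ν i ≥ μ (i+1)`. -/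
def QB (μ ν : ℕ → ℕ) : Prop :=
  ∀ i, ν i ≤ μ i + 2 ∧ μ (i + 1) ≤ ν i

/-- Special: `μ i ≥ ν i - 1` and `ν i ≥ μ (i+1)`. -/
def QS (μ ν : ℕ → ℕ) : Prop :=
  ∀ i, ν i ≤ μ i + 1 ∧ μ (i + 1) ≤ ν i

/-- The condition defining `Q_n^{B,2}`: `μ i ≥ ν i - 2`. -/
def QB2 (μ ν : ℕ → ℕ) : Prop := ∀ i, ν i ≤ μ i + 2

/-- For an antitone sequence, the starting index of the run of equal values
containing index `i`. -/
noncomputable def runStart (l : ℕ → ℕ) (i : ℕ) : ℕ := {j | l i < l j}.ncard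

/-- The map `Φ̂^C`, pointwise: halve even parts; replace an (even-length)
maximal run of an odd part `2k+1` with `k, k+1, k, k+1, …`. -/
noncomputable def hphiC (l : ℕ → ℕ) (i : ℕ) : ℕ :=
  if Even (l i) then l i / 2
  else if Even (i - runStart l i) then l i / 2 else l i / 2 + 1

/-- Partial sums of an integer sequence. -/
def zsum (π : ℕ → ℤ) (k : ℕ) : ℤ := ∑ i ∈ Finset.range k, π i

/-- Dominance order on integer sequences. -/
def ZDominates (l π : ℕ → ℤ) : Prop := ∀ k, zsum π k ≤ zsum l k

/-- The interleaved integer sequence `(2ρ₁+1, 2σ₁−1, 2ρ₂+1, 2σ₂−1, …)`. -/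
def interB (ρ σ : ℕ → ℕ) (i : ℕ) : ℤ :=
  if i % 2 = 0 then 2 * (ρ (i / 2) : ℤ) + 1 else 2 * (σ (i / 2) : ℤ) - 1

/-- The map `Φ^B` on integer sequences: replace a consecutive pair `s < t`
by `(s+t)/2, (s+t)/2` (pointwise description). -/
def phiB (π : ℕ → ℤ) : ℕ → ℤ
  | 0 => if π 0 < π 1 then (π 0 + π 1) / 2 else π 0
  | (j + 1) =>
      if π (j + 1) < π (j + 2) then (π (j + 1) + π (j + 2)) / 2
      else if π j < π (j + 1) then (π j + π (j + 1)) / 2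
      else π (j + 1)

/-- `Φ^B` of a bipartition. -/
def PhiB (ρ σ : ℕ → ℕ) : ℕ → ℤ := phiB (interB ρ σ)

/-- Membership in `P^B_{2n+1}` for an integer sequence: nonnegative, weakly
decreasing, summing to `2n+1`, with every (positive) even part of even
multiplicity. -/
def IsPB (n : ℕ) (l : ℕ → ℤ) : Prop :=
  (∀ i, 0 ≤ l i) ∧ (∀ i, l (i + 1) ≤ l i) ∧
  (∃ N, (∀ i, N ≤ i → l i = 0) ∧ zsum l N = 2 * n + 1) ∧
  ∀ a : ℤ, 0 < a → Even a → Even ({i | l i = a}.ncard)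

/-- Membership in `P^B_{2n+1}` for a natural-number partition. -/
def IsPBN (n : ℕ) (l : ℕ → ℕ) : Prop :=
  IsPartition l ∧ IsComposition (2 * n + 1) l ∧
    ∀ a : ℕ, 0 < a → Even a → Even ({i | l i = a}.ncard)

/-- The map `Φ̂^B`, pointwise (0-indexed, so the paper's index `i` is `j+1`):
an odd part `λ_i` becomes `(λ_i + (−1)^i)/2`; a maximal run of an even part
`2k` starting at (0-indexed) position `s` becomes `k, k, …` if `s` is odd
(paper's `i` even) and `k−1, k+1, k−1, k+1, …` if `s` is even (paper's `i`
odd). -/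
noncomputable def hphiB (l : ℕ → ℕ) (j : ℕ) : ℕ :=
  if Odd (l j) then (if Even j then (l j - 1) / 2 else (l j + 1) / 2)
  else
    if Odd (runStart l j) then l j / 2
    else if Even (j - runStart l j) then l j / 2 - 1 else l j / 2 + 1

/-- First component of the special closure `(ρ;σ)°`. -/
def scRho (ρ σ : ℕ → ℕ) : ℕ → ℕ
  | 0 => if ρ 0 + 1 < σ 0 then (ρ 0 + σ 0) / 2 else ρ 0
  | (i + 1) =>
      if ρ (i + 1) + 1 < σ (i + 1) then (ρ (i + 1) + σ (i + 1)) / 2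
      else if σ i < ρ (i + 1) then (σ i + ρ (i + 1)) / 2
      else ρ (i + 1)

/-- Second component of the special closure `(ρ;σ)°`. -/
def scSigma (ρ σ : ℕ → ℕ) (i : ℕ) : ℕ :=
  if ρ i + 1 < σ i then (ρ i + σ i + 1) / 2
  else if σ i < ρ (i + 1) then (σ i + ρ (i + 1) + 1) / 2
  else σ i

/-- First component of the closure `(ρ;σ)~` into `Q_n^{B,2}`. -/
def tRho (ρ σ : ℕ → ℕ) (i : ℕ) : ℕ :=
  if ρ i + 2 < σ i then (ρ i + σ i + 1) / 2 - 1 else ρ i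

/-- Second component of the closure `(ρ;σ)~` into `Q_n^{B,2}`. -/
def tSigma (ρ σ : ℕ → ℕ) (i : ℕ) : ℕ :=
  if ρ i + 2 < σ i then (ρ i + σ i) / 2 + 1 else σ i

/-- First component of the closure `(ρ;σ)^B` into `Q_n^B`. -/
def bRho (ρ σ : ℕ → ℕ) : ℕ → ℕ
  | 0 => if ρ 0 + 2 < σ 0 then (ρ 0 + σ 0 + 1) / 2 - 1 else ρ 0
  | (i + 1) =>
      if ρ (i + 1) + 2 < σ (i + 1) then (ρ (i + 1) + σ (i + 1) + 1) / 2 - 1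
      else if σ i < ρ (i + 1) then (σ i + ρ (i + 1)) / 2
      else ρ (i + 1)

/-- Second component of the closure `(ρ;σ)^B` into `Q_n^B`. -/
def bSigma (ρ σ : ℕ → ℕ) (i : ℕ) : ℕ :=
  if ρ i + 2 < σ i then (ρ i + σ i) / 2 + 1
  else if σ i < ρ (i + 1) then (σ i + ρ (i + 1) + 1) / 2
  else σ i

/-- First component of the closure `(ρ;σ)^C` into `Q_n^C`. -/
def cRho (ρ σ : ℕ → ℕ) : ℕ → ℕ
  | 0 => if ρ 0 + 1 < σ 0 then (ρ 0 + σ 0) / 2 else ρ 0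
  | (i + 1) =>
      if ρ (i + 1) + 1 < σ (i + 1) then (ρ (i + 1) + σ (i + 1)) / 2
      else if σ i + 1 < ρ (i + 1) then (σ i + ρ (i + 1) + 1) / 2
      else ρ (i + 1)

/-- Second component of the closure `(ρ;σ)^C` into `Q_n^C`. -/
def cSigma (ρ σ : ℕ → ℕ) (i : ℕ) : ℕ :=
  if ρ i + 1 < σ i then (ρ i + σ i + 1) / 2
  else if σ i + 1 < ρ (i + 1) then (σ i + ρ (i + 1)) / 2
  else σ i

/-! Since `π i ≥ π (i + 2)`, an ascent `π i < π (i + 1)` is never followed by another one, so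
`Φ^C` replaces disjoint pairs `2s < 2t` by `s + t, s + t`. Each replacement preserves the sum
and fits between its neighbours, which keeps the sequence decreasing; and every odd value of
`Φ^C(π)` comes from such a pair, so odd values occur in pairs of adjacent positions. -/

namespace IsQuasiPartition

variable {π : ℕ → ℕ}

theorem not_lt_of_lt (hq : IsQuasiPartition π) {i : ℕ} (h : π i < π (i + 1)) :
    ¬ π (i + 1) < π (i + 2) := by
  have := hq i
  omega

end IsQuasiPartition

section phiC

variable {π : ℕ → ℕ}

theorem phiC_of_lt {i : ℕ} (h : π i < π (i + 1)) : phiC π i = (π i + π (i + 1)) / 2 := by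
  cases i <;> simp [phiC, h]

theorem phiC_succ_of_lt (hq : IsQuasiPartition π) {i : ℕ} (h : π i < π (i + 1)) :
    phiC π (i + 1) = (π i + π (i + 1)) / 2 := by
  simp [phiC, hq.not_lt_of_lt h, h]

theorem phiC_eq_zero {i : ℕ} (h₀ : π i = 0) (h₁ : π (i + 1) = 0) : phiC π i = 0 := by
  cases i <;> simp [phiC, h₀, h₁]

theorem phiC_eq_self_or_mean (i : ℕ) :
    phiC π i = π i ∨ (π i < π (i + 1) ∧ phiC π i = (π i + π (i + 1)) / 2) ∨
      ∃ j, i = j + 1 ∧ π j < π (j + 1) ∧ phiC π i = (π j + π (j + 1)) / 2 := by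
  cases i <;> simp only [phiC] <;> split_ifs <;> simp_all

theorem isPartition_phiC (hq : IsQuasiPartition π) : IsPartition (phiC π) := by
  intro i
  cases i with
  | zero =>
    have : π 2 ≤ π 0 := hq 0
    simp only [phiC, zero_add]
    split_ifs <;> omega
  | succ j =>
    have : π (j + 2) ≤ π j := hq j
    have : π (j + 3) ≤ π (j + 1) := hq (j + 1)
    simp only [phiC, add_assoc, Nat.reduceAdd]
    split_ifs <;> omega

def halfRise (π : ℕ → ℕ) : ℕ → ℕ
  | 0 => 0
  | j + 1 => if π j < π (j + 1) then (π (j + 1) - π j) / 2 else 0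

theorem halfRise_eq_zero {k : ℕ} (h : π k = 0) : halfRise π k = 0 := by
  cases k <;> simp [halfRise, h]

theorem halfRise_add_phiC (hq : IsQuasiPartition π) (he : ∀ i, Even (π i)) (k : ℕ) :
    halfRise π k + phiC π k = π k + halfRise π (k + 1) := by
  cases k with
  | zero =>
    have := Nat.even_iff.mp (he 0)
    have := Nat.even_iff.mp (he 1)
    simp only [halfRise, phiC, zero_add]
    split_ifs <;> omega
  | succ j =>
    have : π (j + 2) ≤ π j := hq j
    have := Nat.even_iff.mp (he j)
    have := Nat.even_iff.mp (he (j + 1))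
    have := Nat.even_iff.mp (he (j + 2))
    simp only [halfRise, phiC, add_assoc, Nat.reduceAdd]
    split_ifs <;> omega

theorem psum_phiC (hq : IsQuasiPartition π) (he : ∀ i, Even (π i)) (k : ℕ) :
    psum (phiC π) k = psum π k + halfRise π k := by
  induction k with
  | zero => simp [psum, halfRise]
  | succ k ih =>
    have := halfRise_add_phiC hq he k
    simp only [psum, Finset.sum_range_succ] at ih ⊢
    omega

theorem IsComposition.phiC {m : ℕ} (hq : IsQuasiPartition π) (he : ∀ i, Even (π i))
    (hc : IsComposition m π) : IsComposition m (phiC π) := by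
  obtain ⟨N, hN, hsum⟩ := hc
  refine ⟨N, fun i hi => phiC_eq_zero (hN i hi) (hN (i + 1) (by omega)), ?_⟩
  rw [psum_phiC hq he, halfRise_eq_zero (hN N le_rfl), hsum, add_zero]

end phiC

theorem Set.ncard_union_image_eq_two_mul {α : Type*} {s : Set α} {f : α → α}
    (hf : Function.Injective f) (hs : s.Finite) (hd : Disjoint s (f '' s)) :
    (s ∪ f '' s).ncard = 2 * s.ncard := by
  rw [Set.ncard_union_eq hd hs (hs.image f), Set.ncard_image_of_injective s hf, two_mul]

def ascentsWithMean (π : ℕ → ℕ) (a : ℕ) : Set ℕ :=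
  {i | π i < π (i + 1) ∧ (π i + π (i + 1)) / 2 = a}

section ascentsWithMean

variable {π : ℕ → ℕ}

theorem IsComposition.finite_ascentsWithMean {m : ℕ} (hc : IsComposition m π) (a : ℕ) :
    (ascentsWithMean π a).Finite := by
  obtain ⟨N, hN, -⟩ := hc
  refine (Set.finite_Iio N).subset fun i ⟨hlt, _⟩ => ?_
  by_contra hi
  have := hN (i + 1) (by simp only [Set.mem_Iio, not_lt] at hi; omega)
  omega

theorem IsQuasiPartition.disjoint_ascentsWithMean_image_succ (hq : IsQuasiPartition π)
    (a : ℕ) : Disjoint (ascentsWithMean π a) ((· + 1) '' ascentsWithMean π a) := by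
  rw [Set.disjoint_left]
  rintro _ ⟨hlt, -⟩ ⟨j, ⟨hj, -⟩, rfl⟩
  exact hq.not_lt_of_lt hj hlt

theorem setOf_phiC_eq_of_odd (hq : IsQuasiPartition π) (he : ∀ i, Even (π i)) {a : ℕ}
    (ha : Odd a) :
    {i | phiC π i = a} = ascentsWithMean π a ∪ (· + 1) '' ascentsWithMean π a := by
  ext i
  simp only [Set.mem_ofPred_eq, Set.mem_union, Set.mem_image, ascentsWithMean]
  constructor
  · rintro rfl
    rcases phiC_eq_self_or_mean (π := π) i with h | ⟨hlt, h⟩ | ⟨j, rfl, hlt, h⟩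
    · exact absurd (h ▸ he i) (Nat.not_even_iff_odd.mpr ha)
    · exact Or.inl ⟨hlt, h.symm⟩
    · exact Or.inr ⟨j, ⟨hlt, h.symm⟩, rfl⟩
  · rintro (⟨hlt, rfl⟩ | ⟨j, ⟨hlt, rfl⟩, rfl⟩)
    · exact phiC_of_lt hlt
    · exact phiC_succ_of_lt hq hlt

end ascentsWithMean

/-- If `π` is a quasi-partition of `2n` all of whose parts are
even, then `Φ^C(π)` is a partition of `2n` in which every odd part has even
multiplicity. -/
theorem phiC_mem_PC (n : ℕ) (π : ℕ → ℕ)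
    (hq : IsQuasiPartition π) (hc : IsComposition (2 * n) π)
    (hev : ∀ i, Even (π i)) :
    IsPartition (phiC π) ∧ IsComposition (2 * n) (phiC π) ∧
      ∀ a : ℕ, Odd a → Even ({i | phiC π i = a}.ncard) := by
  refine ⟨isPartition_phiC hq, hc.phiC hq hev, fun a ha => ⟨(ascentsWithMean π a).ncard, ?_⟩⟩
  rw [setOf_phiC_eq_of_odd hq hev ha, Set.ncard_union_image_eq_two_mul (add_left_injective 1)
    (hc.finite_ascentsWithMean a) (hq.disjoint_ascentsWithMean_image_succ a), two_mul]
end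

section
/- Let (ρ;σ) be a bipartition of n, let π = (2ρ_1, 2σ_1, 2ρ_2, 2σ_2, ...) be the doubled interleaved quasi-partition, and let ξ = Φ^C(ρ;σ) be the partition obtained by replacing each consecutive pair 2s, 2t with s+t, s+t whenever 2s < 2t. Then for any partition λ of 2n, λ dominates π if and only if λ dominates ξ. -/
open Finset

/-!
`Φ^C` averages each ascending pair `π k < π (k+1)` of even parts; in a quasi-partition such
pairs never overlap. So the partial sums of `Φ^C(ρ;σ)` agree with those of `π` except at the cut
inside such a pair, where the partial sum rises to the average of its two neighbours. Hence
`Φ^C(ρ;σ)` dominates `π`, and conversely a partition `λ` dominating `π` also dominates it at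
those cuts, because the partial sums of a weakly decreasing `λ` are concave.
-/

lemma psum_succ (f : ℕ → ℕ) (k : ℕ) : psum f (k + 1) = psum f k + f k :=
  sum_range_succ f k

lemma IsQuasiPartition.interleave {ρ σ : ℕ → ℕ} (hρ : IsPartition ρ) (hσ : IsPartition σ) :
    IsQuasiPartition (interleave ρ σ) := by
  intro i
  have hdiv : (i + 2) / 2 = i / 2 + 1 := by omega
  simp only [_root_.interleave, Nat.add_mod_right, hdiv]
  split
  · exact hρ (i / 2)
  · exact hσ (i / 2)

lemma IsQuasiPartition.const_mul {π : ℕ → ℕ} (hπ : IsQuasiPartition π) (c : ℕ) :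
    IsQuasiPartition (fun i => c * π i) :=
  fun i => Nat.mul_le_mul_left c (hπ i)

lemma IsPartition.psum_add_psum_le {l : ℕ → ℕ} (hl : IsPartition l) (k : ℕ) :
    psum l k + psum l (k + 2) ≤ 2 * psum l (k + 1) := by
  have := hl k
  rw [psum_succ l (k + 1), psum_succ l k]
  omega

lemma Dominates.trans {l μ π : ℕ → ℕ} (hlμ : Dominates l μ) (hμπ : Dominates μ π) :
    Dominates l π :=
  fun k => (hμπ k).trans (hlμ k)

section phiC

variable {π : ℕ → ℕ} (he : ∀ i, Even (π i)) (hq : IsQuasiPartition π)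
include he hq

lemma two_mul_psum_phiC_succ (k : ℕ) :
    2 * psum (phiC π) (k + 1) =
      if π k < π (k + 1) then 2 * psum π k + (π k + π (k + 1)) else 2 * psum π (k + 1) := by
  have hpair (j : ℕ) : 2 * ((π j + π (j + 1)) / 2) = π j + π (j + 1) :=
    Nat.mul_div_cancel' (even_iff_two_dvd.mp ((he j).add (he (j + 1))))
  induction k with
  | zero =>
    have : 2 * ((π 0 + π 1) / 2) = π 0 + π 1 := hpair 0
    simp only [psum, zero_add, range_one, sum_singleton, range_zero, sum_empty, phiC]
    split_ifs <;> omega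
  | succ k ih =>
    have := hpair k
    have : 2 * ((π (k + 1) + π (k + 2)) / 2) = π (k + 1) + π (k + 2) := hpair (k + 1)
    have hnot_overlap : π (k + 1) < π (k + 2) → ¬ π k < π (k + 1) := by
      have := hq k
      omega
    rw [psum_succ, Nat.mul_add, ih, psum_succ π (k + 1), psum_succ π k]
    simp only [phiC, Nat.add_assoc, Nat.reduceAdd]
    split_ifs <;> omega

lemma dominates_phiC : Dominates (phiC π) π
  | 0 => le_rfl
  | k + 1 => by
    have hk := two_mul_psum_phiC_succ he hq k
    have := psum_succ π k
    split_ifs at hk <;> omega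

lemma Dominates.phiC {l : ℕ → ℕ} (hl : IsPartition l) (hlπ : Dominates l π) :
    Dominates l (phiC π)
  | 0 => le_rfl
  | k + 1 => by
    have hk := two_mul_psum_phiC_succ he hq k
    split_ifs at hk
    · have hconc := hl.psum_add_psum_le k
      have h0 := hlπ k
      have h2 := hlπ (k + 2)
      rw [psum_succ π (k + 1), psum_succ π k] at h2
      omega
    · have := hlπ (k + 1)
      omega

end phiC

theorem dominates_phiC_iff_general (n : ℕ) (ρ σ l : ℕ → ℕ)
    (h : IsBipartition n ρ σ)
    (hl : IsPartition l) :
    Dominates l (fun i => 2 * interleave ρ σ i) ↔ Dominates l (PhiC ρ σ) := by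
  have he : ∀ i, Even (2 * interleave ρ σ i) := fun i => even_two_mul _
  have hq := (IsQuasiPartition.interleave h.1 h.2.1).const_mul 2
  exact ⟨Dominates.phiC he hq hl, fun hξ => hξ.trans (dominates_phiC he hq)⟩

/-- for a bipartition `(ρ;σ)` of `n` with doubled interleaving
`π` and `ξ = Φ^C(ρ;σ)`, a partition `λ` of `2n` dominates `π` iff it
dominates `ξ`. -/
theorem dominates_phiC_iff (n : ℕ) (ρ σ l : ℕ → ℕ)
    (h : IsBipartition n ρ σ)
    (hl : IsPartition l) (hlc : IsComposition (2 * n) l) :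
    Dominates l (fun i => 2 * interleave ρ σ i) ↔ Dominates l (PhiC ρ σ) :=
  dominates_phiC_iff_general n ρ σ l h hl
end

section
/- Define the map Φ̂^C: P^C_{2n} → Q_n as follows: given λ ∈ P^C_{2n}, halve all even parts, and replace every maximal string of equal odd parts 2k+1, 2k+1, ..., 2k+1 (of even length) with k, k+1, k, k+1, ...; the result is a quasi-partition of n, whose associated bipartition is Φ̂^C(λ). Then Φ̂^C(λ) lies in Q_n^C, i.e. writing Φ̂^C(λ) = (μ;ν), one has μ_i ≥ ν_i - 1 and ν_i ≥ μ_{i+1} - 1 for all i. -/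
open Finset

/-! Each entry of `Φ̂^C(λ)` is `⌊λ_i/2⌋` or `⌊λ_i/2⌋ + 1`, so with `λ` weakly decreasing the
inequalities `π_{i+1} ≤ π_i + 1` (which give `Q^C`) and, away from runs of an odd part,
`π_{i+2} ≤ π_i` are immediate; inside such a run the pattern `k, k+1, k, k+1, …` has period
two. For the sum, doubling undoes halving on even parts, while on a run of the odd part `2k+1`
the entries pair up as `k + (k+1) = 2k+1`, which is where the even multiplicity is needed. -/

lemma Nat.eq_Iio_ncard_of_isLowerSet {s : Set ℕ} (h : IsLowerSet s) (hs : s.Finite) :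
    s = Set.Iio s.ncard := by
  obtain rfl | ⟨a, rfl⟩ := h.eq_univ_or_Iio
  · exact absurd hs Set.infinite_univ
  · rw [Set.ncard_Iio_nat]

section runStart

variable {l : ℕ → ℕ}

lemma setOf_lt_eq_Iio_runStart (hl : Antitone l) (i : ℕ) :
    {j | l i < l j} = Set.Iio (runStart l i) :=
  Nat.eq_Iio_ncard_of_isLowerSet (fun _ _ hba hb => lt_of_lt_of_le hb (hl hba))
    ((Set.finite_Iio i).subset fun _ hj => not_le.1 fun hij => (hl hij).not_gt hj)

lemma runStart_le (hl : Antitone l) (i : ℕ) : runStart l i ≤ i := by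
  by_contra! h
  have hi : i ∈ {j | l i < l j} := by rw [setOf_lt_eq_Iio_runStart hl]; exact h
  exact lt_irrefl (l i) hi

lemma runStart_congr {i j : ℕ} (h : l j = l i) : runStart l j = runStart l i := by
  simp only [runStart, h]

lemma setOf_eq_eq_Ico (hl : Antitone l) {N : ℕ} (hN : ∀ j, N ≤ j → l j = 0) {i : ℕ}
    (hi : 0 < l i) : {j | l j = l i} = Set.Ico (runStart l i) {j | l i ≤ l j}.ncard := by
  have hge : {j | l i ≤ l j} = Set.Iio {j | l i ≤ l j}.ncard :=
    Nat.eq_Iio_ncard_of_isLowerSet (fun _ _ hba hb => le_trans hb (hl hba))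
      ((Set.finite_Iio N).subset fun j hj => Set.mem_Iio.2 <| not_le.1 fun hNj => by
        simp only [Set.mem_ofPred_eq, hN j hNj] at hj; omega)
  ext j
  have h1 := Set.ext_iff.1 hge j
  have h2 := Set.ext_iff.1 (setOf_lt_eq_Iio_runStart hl i) j
  simp only [Set.mem_ofPred_eq, Set.mem_Iio, Set.mem_Ico] at h1 h2 ⊢
  omega

end runStart

lemma hphiC_of_even {l : ℕ → ℕ} {i : ℕ} (h : Even (l i)) : hphiC l i = l i / 2 := by
  simp only [hphiC, if_pos h]

lemma div_two_le_hphiC (l : ℕ → ℕ) (i : ℕ) : l i / 2 ≤ hphiC l i := by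
  unfold hphiC; split_ifs <;> omega

lemma hphiC_le (l : ℕ → ℕ) (i : ℕ) : hphiC l i ≤ l i / 2 + 1 := by
  unfold hphiC; split_ifs <;> omega

section hphiC

variable {l : ℕ → ℕ}

lemma hphiC_succ_le (hl : Antitone l) (i : ℕ) : hphiC l (i + 1) ≤ hphiC l i + 1 := by
  have : l (i + 1) ≤ l i := hl (Nat.le_succ i)
  have := div_two_le_hphiC l i
  have := hphiC_le l (i + 1)
  omega

lemma hphiC_add_two_le (hl : Antitone l) (i : ℕ) : hphiC l (i + 2) ≤ hphiC l i := by
  have hlb := div_two_le_hphiC l i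
  have hub := hphiC_le l (i + 2)
  rcases (hl (Nat.le_add_right i 2)).eq_or_lt with heq | hlt
  · have := runStart_le hl i
    have hpar : Even (i + 2 - runStart l i) ↔ Even (i - runStart l i) := by
      rw [show i + 2 - runStart l i = i - runStart l i + 2 by omega, Nat.even_add]
      simp only [even_two, iff_true]
    unfold hphiC
    simp only [heq, runStart_congr heq, hpar]
    split_ifs <;> omega
  · rcases Nat.even_or_odd (l (i + 2)) with he | ho
    · rw [hphiC_of_even he]; omega
    · have := Nat.odd_iff.1 ho
      by_cases hgap : l i = l (i + 2) + 1
      · rw [hphiC_of_even (i := i) (by rw [hgap]; exact ho.add_one)]; omega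
      · omega

lemma hphiC_add_hphiC_succ {i : ℕ} (hl : Antitone l) (hodd : Odd (l i))
    (hsucc : l (i + 1) = l i) (hpar : Even (i - runStart l i)) :
    hphiC l i + hphiC l (i + 1) = l i := by
  have := runStart_le hl i
  have hpar' : ¬ Even (i + 1 - runStart l i) := by
    rw [show i + 1 - runStart l i = i - runStart l i + 1 by omega, Nat.even_add_one]
    exact not_not.2 hpar
  have := Nat.odd_iff.1 hodd
  simp only [hphiC, hsucc, runStart_congr hsucc, if_neg (Nat.not_even_iff_odd.2 hodd),
    if_pos hpar, if_neg hpar']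
  omega

lemma two_mul_sum_hphiC_run (hl : Antitone l) {i : ℕ} (hodd : Odd (l i)) (c : ℕ)
    (hrun : ∀ j ∈ Ico (runStart l i) (runStart l i + 2 * c), l j = l i) :
    2 * ∑ j ∈ Ico (runStart l i) (runStart l i + 2 * c), hphiC l j =
      ∑ j ∈ Ico (runStart l i) (runStart l i + 2 * c), l j := by
  induction c with
  | zero => simp
  | succ c ih =>
    set s := runStart l i
    have hj : l (s + 2 * c) = l i := hrun _ (by simp only [mem_Ico]; omega)
    have hj1 : l (s + 2 * c + 1) = l i := hrun _ (by simp only [mem_Ico]; omega)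
    have hpair : hphiC l (s + 2 * c) + hphiC l (s + 2 * c + 1) = l (s + 2 * c) :=
      hphiC_add_hphiC_succ hl (hj ▸ hodd) (hj1.trans hj.symm)
        (by rw [runStart_congr hj, show s + 2 * c - s = 2 * c by omega]; exact even_two_mul c)
    rw [show s + 2 * (c + 1) = s + 2 * c + 1 + 1 by ring]
    simp only [sum_Ico_succ_top (show s ≤ s + 2 * c + 1 by omega),
      sum_Ico_succ_top (show s ≤ s + 2 * c by omega), mul_add]
    rw [ih fun j hj => hrun j (by simp only [mem_Ico] at hj ⊢; omega)]
    omega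

lemma two_mul_sum_hphiC_fiber (hl : Antitone l) {N : ℕ} (hN : ∀ j, N ≤ j → l j = 0)
    (hmult : ∀ a : ℕ, Odd a → Even {j | l j = a}.ncard) (a : ℕ) :
    2 * ∑ j ∈ (range N).filter (l · = a), hphiC l j =
      ∑ j ∈ (range N).filter (l · = a), l j := by
  rcases Nat.even_or_odd a with ha | ha
  · rw [mul_sum]
    refine sum_congr rfl fun j hj => ?_
    have hja : Even (l j) := (mem_filter.1 hj).2 ▸ ha
    rw [hphiC_of_even hja, Nat.mul_div_cancel' hja.two_dvd]
  obtain hempty | ⟨i, hi⟩ := ((range N).filter (l · = a)).eq_empty_or_nonempty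
  · simp only [hempty, sum_empty, mul_zero]
  obtain ⟨-, rfl⟩ := mem_filter.1 hi
  have hset := setOf_eq_eq_Ico hl hN ha.pos
  have hrun (j : ℕ) := Set.ext_iff.1 hset j
  obtain ⟨c, hc⟩ : ∃ c, {j | l i ≤ l j}.ncard = runStart l i + 2 * c := by
    have hi_mem := (hrun i).1 rfl
    obtain ⟨c, hc⟩ := hmult _ ha
    rw [hset, Set.ncard_Ico_nat] at hc
    simp only [Set.mem_Ico] at hi_mem
    exact ⟨c, by omega⟩
  simp only [hc, Set.mem_ofPred_eq, Set.mem_Ico] at hrun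
  have hfiber : (range N).filter (l · = l i) = Ico (runStart l i) (runStart l i + 2 * c) := by
    ext j
    simp only [mem_filter, mem_range, mem_Ico]
    refine ⟨fun hj => (hrun j).1 hj.2, fun hj => ⟨?_, (hrun j).2 hj⟩⟩
    by_contra! hNj
    have := (hrun j).2 hj
    have := hN j hNj
    have := ha.pos
    omega
  rw [hfiber]
  exact two_mul_sum_hphiC_run hl ha c fun j hj => (hrun j).2 (mem_Ico.1 hj)

lemma two_mul_psum_hphiC (hl : Antitone l) {N : ℕ} (hN : ∀ j, N ≤ j → l j = 0)
    (hmult : ∀ a : ℕ, Odd a → Even {j | l j = a}.ncard) :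
    2 * psum (hphiC l) N = psum l N := by
  unfold psum
  rw [← sum_fiberwise_of_maps_to (fun j hj => mem_image_of_mem l hj) (hphiC l),
    ← sum_fiberwise_of_maps_to (fun j hj => mem_image_of_mem l hj) l, mul_sum]
  exact sum_congr rfl fun a _ => two_mul_sum_hphiC_fiber hl hN hmult a

end hphiC

/-- for `λ ∈ P^C_{2n}`, `Φ̂^C(λ)` is a quasi-partition of `n`
whose associated bipartition is C-distinguished. -/
theorem hphiC_mem_QC (n : ℕ) (l : ℕ → ℕ) (h : IsPC n l) :
    IsQuasiPartition (hphiC l) ∧ IsComposition n (hphiC l) ∧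
      QC (fun j => hphiC l (2 * j)) (fun j => hphiC l (2 * j + 1)) := by
  obtain ⟨hp, ⟨N, hN, hsum⟩, hmult⟩ := h
  have hl : Antitone l := antitone_nat_of_succ_le hp
  refine ⟨hphiC_add_two_le hl, ⟨N, fun i hi => ?_, ?_⟩, fun i => ⟨hphiC_succ_le hl _, ?_⟩⟩
  · rw [hphiC_of_even (by rw [hN i hi]; exact Even.zero), hN i hi]
  · have := two_mul_psum_hphiC hl hN hmult
    omega
  · have := hphiC_succ_le hl (2 * i + 1)
    rwa [show 2 * i + 1 + 1 = 2 * (i + 1) by ring] at this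
end

section
/- Define Φ^B on bipartitions of n: given (ρ;σ), form the sequence (2ρ_1+1, 2σ_1−1, 2ρ_2+1, 2σ_2−1, ...) (with the convention that the tail becomes −1, 1, −1, 1, ...); whenever two consecutive terms s, t satisfy s < t, replace them with (s+t)/2, (s+t)/2 (which is an integer); the entries of the infinite tail all become 0. Then the result Φ^B(ρ;σ) is a partition of 2n+1 in which every even part has even multiplicity. -/
open Finset

/-!
Write `π` for the interleaved sequence. All its terms are odd and `π (i + 2) ≤ π i`, so two
ascents `π i < π (i + 1)` are never adjacent and `Φ^B` averages disjoint pairs. Averaging such a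
pair keeps the sequence weakly decreasing and, by parity, preserves its sum; every other term
stays odd. So an even value is only taken on averaged pairs and has even multiplicity. The tail
`1, -1, 1, -1, …` of `π` turns into zeros, and the total `2n + 1` comes from
`π i = 2 · interleave ρ σ i + (-1) ^ i`.
-/

section phiB

variable {π : ℕ → ℤ}

theorem phiB_of_lt {i : ℕ} (h : π i < π (i + 1)) : phiB π i = (π i + π (i + 1)) / 2 := by
  cases i <;> simp [phiB, h]

theorem phiB_succ_of_lt (hπ : ∀ i, π (i + 2) ≤ π i) {i : ℕ} (h : π i < π (i + 1)) :
    phiB π (i + 1) = (π i + π (i + 1)) / 2 := by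
  have := hπ i
  simp only [phiB, h, if_true, show ¬ π (i + 1) < π (i + 2) by omega, if_false]

theorem phiB_eq_self {i : ℕ} (h : π (i + 1) ≤ π i) (h' : ∀ j, j + 1 = i → π i ≤ π j) :
    phiB π i = π i := by
  cases i with
  | zero => exact if_neg (not_lt.mpr h)
  | succ j => exact (if_neg (not_lt.mpr h)).trans (if_neg (not_lt.mpr (h' j rfl)))

theorem phiB_nonneg (hπ : ∀ i, 0 ≤ π i + π (i + 1)) (i : ℕ) : 0 ≤ phiB π i := by
  cases i with
  | zero =>
    have : 0 ≤ π 0 + π 1 := hπ 0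
    simp only [phiB]
    split_ifs <;> omega
  | succ j =>
    have : 0 ≤ π j + π (j + 1) := hπ j
    have : 0 ≤ π (j + 1) + π (j + 2) := hπ (j + 1)
    simp only [phiB]
    split_ifs <;> omega

/-- Ascents are never adjacent, so each of `i`, `i + 1` is averaged with at most one
neighbour. -/
theorem phiB_antitone (hπ : ∀ i, π (i + 2) ≤ π i) : Antitone (phiB π) := by
  refine antitone_nat_of_succ_le fun i => ?_
  cases i with
  | zero =>
    have : π 2 ≤ π 0 := hπ 0
    simp only [phiB, zero_add]
    split_ifs <;> omega
  | succ j =>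
    have : π (j + 2) ≤ π j := hπ j
    have : π (j + 3) ≤ π (j + 1) := hπ (j + 1)
    simp only [phiB, show j + 1 + 1 = j + 2 from rfl, show j + 1 + 2 = j + 3 from rfl]
    split_ifs <;> omega

theorem two_mul_zsum_phiB (hodd : ∀ i, Odd (π i)) (hπ : ∀ i, π (i + 2) ≤ π i) (k : ℕ) :
    2 * zsum (phiB π) (k + 1) =
      2 * zsum π (k + 1) + if π k < π (k + 1) then π (k + 1) - π k else 0 := by
  induction k with
  | zero =>
    have := Int.odd_iff.mp (hodd 0)
    have := Int.odd_iff.mp (hodd 1)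
    simp only [zsum, zero_add, Finset.sum_range_one, phiB.eq_1]
    split_ifs <;> omega
  | succ k ih =>
    have := hπ k
    have := Int.odd_iff.mp (hodd k)
    have := Int.odd_iff.mp (hodd (k + 1))
    have := Int.odd_iff.mp (hodd (k + 2))
    simp only [zsum, Finset.sum_range_succ _ (k + 1), phiB.eq_2,
      show k + 1 + 1 = k + 2 from rfl] at ih ⊢
    split_ifs at ih ⊢ <;> omega

theorem zsum_phiB_of_not_lt (hodd : ∀ i, Odd (π i)) (hπ : ∀ i, π (i + 2) ≤ π i) {k : ℕ}
    (h : ¬ π k < π (k + 1)) : zsum (phiB π) (k + 1) = zsum π (k + 1) := by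
  have := two_mul_zsum_phiB hodd hπ k
  rw [if_neg h] at this
  omega

theorem phiB_eq_zero_of_eq_neg_one_pow (hπ : ∀ i, π (i + 2) ≤ π i) {M : ℕ}
    (htail : ∀ i, M ≤ i → π i = (-1) ^ i) {i : ℕ} (hi : M < i) : phiB π i = 0 := by
  have alt : ∀ j, M ≤ j → Odd j → π j = -1 ∧ π (j + 1) = 1 := fun j hj hj_odd =>
    ⟨by rw [htail j hj, hj_odd.neg_one_pow],
      by rw [htail (j + 1) (by omega), hj_odd.add_one.neg_one_pow]⟩
  rcases Nat.even_or_odd i with hi_even | hi_odd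
  · obtain ⟨j, rfl⟩ : ∃ j, i = j + 1 := ⟨i - 1, by omega⟩
    obtain ⟨h0, h1⟩ := alt j (by omega) (by simpa [Nat.even_add_one] using hi_even)
    rw [phiB_succ_of_lt hπ (by omega), h0, h1]
    rfl
  · obtain ⟨h0, h1⟩ := alt i hi.le hi_odd
    rw [phiB_of_lt (by omega), h0, h1]
    rfl

/-- Off the averaged pairs `phiB π` agrees with the odd sequence `π`, so the level set of an
even value is a disjoint union `A ∪ (A + 1)` over ascent positions `A`. -/
theorem even_ncard_phiB_eq (hodd : ∀ i, Odd (π i)) (hπ : ∀ i, π (i + 2) ≤ π i) {a : ℤ}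
    (ha : Even a) : Even {i | phiB π i = a}.ncard := by
  set A := {i | phiB π i = a ∧ π i < π (i + 1)}
  have hsucc : ∀ j, π j < π (j + 1) → phiB π (j + 1) = phiB π j := fun j h => by
    rw [phiB_succ_of_lt hπ h, phiB_of_lt h]
  have hS : {i | phiB π i = a} = A ∪ (· + 1) '' A := by
    ext i
    refine ⟨fun hi => ?_, ?_⟩
    · by_cases h : π i < π (i + 1)
      · exact Or.inl ⟨hi, h⟩
      · obtain ⟨j, rfl, hj⟩ : ∃ j, j + 1 = i ∧ π j < π i := by
          by_contra! hno
          have heq := phiB_eq_self (not_lt.mp h) hno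
          rw [Set.mem_ofPred_eq, heq] at hi
          exact Int.not_even_iff_odd.mpr (hodd i) (hi ▸ ha)
        exact Or.inr ⟨j, ⟨(hsucc j hj).symm.trans hi, hj⟩, rfl⟩
    · rintro (⟨hi, -⟩ | ⟨j, ⟨hj, hlt⟩, rfl⟩)
      · exact hi
      · exact (hsucc j hlt).trans hj
  have hdisj : Disjoint A ((· + 1) '' A) := by
    rw [Set.disjoint_left]
    rintro _ ⟨-, h1⟩ ⟨j, ⟨-, h2⟩, rfl⟩
    have h1 : π (j + 1) < π (j + 2) := h1
    have := hπ j
    omega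
  by_cases hA : A.Finite
  · rw [hS, Set.ncard_union_eq hdisj hA (hA.image _),
      Set.ncard_image_of_injective _ (add_left_injective 1)]
    exact ⟨_, rfl⟩
  · rw [hS, Set.Infinite.ncard (fun h => hA (h.subset Set.subset_union_left))]
    exact ⟨0, rfl⟩

end phiB

section interB

variable (ρ σ : ℕ → ℕ)

theorem interB_eq (i : ℕ) : interB ρ σ i = 2 * interleave ρ σ i + (-1) ^ i := by
  rcases Nat.even_or_odd i with h | h
  · simp [interB, interleave, Nat.even_iff.mp h, h.neg_one_pow]
  · simp [interB, interleave, Nat.odd_iff.mp h, h.neg_one_pow, sub_eq_add_neg]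

theorem odd_interB (i : ℕ) : Odd (interB ρ σ i) := by
  rw [interB_eq]
  exact (even_two_mul _).add_odd (odd_neg_one.pow)

theorem interB_add_succ_nonneg (i : ℕ) : 0 ≤ interB ρ σ i + interB ρ σ (i + 1) := by
  have : interB ρ σ i + interB ρ σ (i + 1) = 2 * (interleave ρ σ i + interleave ρ σ (i + 1)) := by
    rw [interB_eq, interB_eq, pow_succ]
    ring
  rw [this]
  positivity

theorem zsum_interB (m : ℕ) :
    zsum (interB ρ σ) m = 2 * psum (interleave ρ σ) m + if Even m then 0 else 1 := by
  simp only [zsum, psum, interB_eq, Finset.sum_add_distrib, ← Finset.mul_sum, neg_one_geom_sum]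
  push_cast
  rfl

end interB

theorem interB_add_two_le {ρ σ : ℕ → ℕ} (hρ : IsPartition ρ) (hσ : IsPartition σ) (i : ℕ) :
    interB ρ σ (i + 2) ≤ interB ρ σ i := by
  have hdiv : (i + 2) / 2 = i / 2 + 1 := by omega
  rcases Nat.mod_two_eq_zero_or_one i with h | h
  · simp only [interB, show (i + 2) % 2 = 0 by omega, h, hdiv, if_true]
    have := hρ (i / 2)
    omega
  · simp only [interB, show (i + 2) % 2 = 1 by omega, h, hdiv, one_ne_zero, if_false]
    have := hσ (i / 2)
    omega

theorem psum_eq_of_le {f : ℕ → ℕ} {N M : ℕ} (hf : ∀ i, N ≤ i → f i = 0) (h : N ≤ M) :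
    psum f M = psum f N :=
  (Finset.sum_subset (Finset.range_mono h) fun i _ hiN =>
    hf i (not_lt.mp (Finset.mem_range.not.mp hiN))).symm

/-- for a bipartition `(ρ;σ)` of `n`, `Φ^B(ρ;σ)` is a partition
of `2n+1` in which every even part has even multiplicity. -/
theorem phiB_mem_PB (n : ℕ) (ρ σ : ℕ → ℕ) (h : IsBipartition n ρ σ) :
    IsPB n (PhiB ρ σ) := by
  obtain ⟨hρ, hσ, N, hN, hsum⟩ := h
  have hodd := odd_interB ρ σ
  have hquasi := interB_add_two_le hρ hσ
  have htail : ∀ i, N ≤ i → interB ρ σ i = (-1) ^ i := fun i hi => by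
    simp [interB_eq, hN i hi]
  have hdesc : ¬ interB ρ σ (2 * N) < interB ρ σ (2 * N + 1) := by
    rw [htail _ (by omega), htail _ (by omega), pow_succ, (even_two_mul N).neg_one_pow]
    norm_num
  refine ⟨phiB_nonneg (interB_add_succ_nonneg ρ σ),
    fun i => phiB_antitone hquasi (Nat.le_succ i),
    ⟨2 * N + 1, fun i hi => phiB_eq_zero_of_eq_neg_one_pow hquasi htail (by omega), ?_⟩,
    fun _ _ ha => even_ncard_phiB_eq hodd hquasi ha⟩
  rw [PhiB, zsum_phiB_of_not_lt hodd hquasi hdesc, zsum_interB,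
    psum_eq_of_le hN (by omega), hsum, if_neg (by simp)]
end
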